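/- Let B be a Boolean algebra, and let Spec(B) denote the set of bounded lattice homomorphisms f : B → Bool, topologized as a subspace of the product space Bool^B where Bool carries the discrete topology. Then the map sending b ∈ B to V_b = { f ∈ Spec(B) | f(b) = ⊤ } is an isomorphism of Boolean algebras from B onto the Boolean algebra of clopen subsets of Spec(B): each V_b is clopen, the map is injective, preserves ⊤, ⊥, joins, meets and complements, and every clopen subset of Spec(B) is of the form V_b for some b ∈ B. -/

import Mathlib

/-!
Every `b ≰ c` is separated by a homomorphism `B → Bool` (the characteristic function of the
complement of a prime ideal containing `c` but not `b`, which exists by the prime ideal theorem),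
so `b ↦ V b` is injective. The conditions defining a bounded lattice homomorphism are closed in
the compact space `B → Bool`, so the spectrum is compact. Its topology is generated by the
coordinate fibres `{f | f b = true} = V b` and `{f | f b = false} = V bᶜ`; these are closed
under finite intersections, hence form a basis, and by compactness a clopen set is a finite
union `V b₁ ∪ ⋯ ∪ V bₙ = V (b₁ ⊔ ⋯ ⊔ bₙ)`.
-/

open TopologicalSpace

namespace Order.Ideal

variable {α : Type*} [Lattice α] [BoundedOrder α] {J : Ideal α}

open scoped Classical in
noncomputable def IsPrime.toBoolHom (hJ : J.IsPrime) : BoundedLatticeHom α Bool where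
  toFun x := decide (x ∉ J)
  map_sup' x y := by simp only [sup_mem_iff, not_and_or, Bool.decide_or]; rfl
  map_inf' x y := by
    have inf_mem_iff : x ⊓ y ∈ J ↔ x ∈ J ∨ y ∈ J :=
      ⟨hJ.mem_or_mem, fun h => h.elim (J.lower inf_le_left) (J.lower inf_le_right)⟩
    simp only [inf_mem_iff, not_or, Bool.decide_and]; rfl
  map_top' := by simp [hJ.top_notMem]
  map_bot' := by simp [J.bot_mem]

theorem IsPrime.toBoolHom_eq_true_iff (hJ : J.IsPrime) {x : α} :
    hJ.toBoolHom x = true ↔ x ∉ J := by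
  classical
  exact decide_eq_true_iff

end Order.Ideal

section BoolHom

variable {α : Type*} [DistribLattice α] [BoundedOrder α]

theorem exists_boundedLatticeHom_bool_of_not_le {a b : α} (h : ¬a ≤ b) :
    ∃ f : BoundedLatticeHom α Bool, f a = true ∧ f b = false := by
  have hab : Disjoint (Order.PFilter.principal a : Set α) (Order.Ideal.principal b) :=
    Set.disjoint_left.2 fun _ hxa hxb => h ((Order.PFilter.mem_principal.1 hxa).trans hxb)
  obtain ⟨J, hJ, hbJ, haJ⟩ := DistribLattice.prime_ideal_of_disjoint_filter_ideal hab
  refine ⟨hJ.toBoolHom, ?_, ?_⟩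
  · exact hJ.toBoolHom_eq_true_iff.2
      (Set.disjoint_left.1 haJ (Order.PFilter.mem_principal.2 le_rfl))
  · simpa [Bool.eq_false_iff, hJ.toBoolHom_eq_true_iff] using hbJ Order.Ideal.mem_principal_self

theorem le_iff_forall_boundedLatticeHom_bool {a b : α} :
    a ≤ b ↔ ∀ f : BoundedLatticeHom α Bool, f a ≤ f b := by
  refine ⟨fun hab f => OrderHomClass.mono f hab, fun h => ?_⟩
  by_contra hab
  obtain ⟨f, hfa, hfb⟩ := exists_boundedLatticeHom_bool_of_not_le hab
  exact absurd (hfa ▸ hfb ▸ h f) (by decide)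

end BoolHom

instance : TopologicalLattice Bool where
  continuous_sup := continuous_of_discreteTopology
  continuous_inf := continuous_of_discreteTopology

theorem BoundedLatticeHom.isClosed_range_coe (α β : Type*) [Lattice α] [BoundedOrder α]
    [Lattice β] [BoundedOrder β] [TopologicalSpace β] [T2Space β] [TopologicalLattice β] :
    IsClosed (Set.range ((⇑) : BoundedLatticeHom α β → α → β)) := by
  refine isClosed_of_closure_subset fun g hg => ?_
  have closure_range {p : (α → β) → Prop} (hp : IsClosed {g | p g})
      (hf : ∀ f : BoundedLatticeHom α β, p f) : p g :=
    closure_minimal (Set.range_subset_iff.2 hf) hp hg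
  refine ⟨⟨⟨⟨g, fun x y => ?_⟩, fun x y => ?_⟩, ?_, ?_⟩, rfl⟩
  · exact closure_range (isClosed_eq (continuous_apply _)
      ((continuous_apply x).sup (continuous_apply y))) (map_sup · x y)
  · exact closure_range (isClosed_eq (continuous_apply _)
      ((continuous_apply x).inf (continuous_apply y))) (map_inf · x y)
  · exact closure_range (isClosed_eq (continuous_apply _) continuous_const) map_top
  · exact closure_range (isClosed_eq (continuous_apply _) continuous_const) map_bot

theorem induced_pi_eq_generateFrom_fibers {X ι β : Type*} [TopologicalSpace β]
    [DiscreteTopology β] (g : X → ι → β) :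
    TopologicalSpace.induced g Pi.topologicalSpace =
      generateFrom {s | ∃ i c, s = {x | g x i = c}} := by
  have fibers_eq : {s | ∃ i c, s = {x | g x i = c}} =
      ⋃ i, Set.preimage (fun x => g x i) '' {s | ∃ c, s = {c}} := by
    ext s
    simp only [Set.mem_ofPred_eq, Set.mem_iUnion, Set.mem_image]
    constructor
    · rintro ⟨i, c, rfl⟩
      exact ⟨i, {c}, ⟨c, rfl⟩, rfl⟩
    · rintro ⟨i, _, ⟨c, rfl⟩, rfl⟩
      exact ⟨i, c, rfl⟩
  rw [fibers_eq, generateFrom_iUnion, Pi.topologicalSpace, induced_iInf]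
  congr 1
  funext i
  rw [induced_compose, ← induced_generateFrom_eq,
    ← (isTopologicalBasis_singletons β).eq_generateFrom]
  rfl

def boolSpectrum (α : Type*) [Lattice α] [BoundedOrder α] : Set (α → Bool) :=
  Set.range ((⇑) : BoundedLatticeHom α Bool → α → Bool)

namespace boolSpectrum

variable {α : Type*}

section Lattice

variable [Lattice α] [BoundedOrder α]

instance : CompactSpace (boolSpectrum α) :=
  isCompact_iff_compactSpace.1 (BoundedLatticeHom.isClosed_range_coe α Bool).isCompact

variable (α) in
def basicOpen : BoundedLatticeHom α (Set (boolSpectrum α)) where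
  toFun a := {f | f.1 a = true}
  map_sup' a b := by ext ⟨_, f, rfl⟩; simp
  map_inf' a b := by ext ⟨_, f, rfl⟩; simp
  map_top' := by ext ⟨_, f, rfl⟩; simp
  map_bot' := by ext ⟨_, f, rfl⟩; simp

@[simp]
theorem mem_basicOpen {a : α} {f : boolSpectrum α} : f ∈ basicOpen α a ↔ f.1 a = true :=
  Iff.rfl

theorem isClopen_basicOpen (a : α) : IsClopen (basicOpen α a) :=
  (isClopen_discrete {true}).preimage ((continuous_apply a).comp continuous_subtype_val)

end Lattice

section DistribLattice

variable [DistribLattice α] [BoundedOrder α]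

theorem basicOpen_subset_basicOpen_iff {a b : α} :
    basicOpen α a ⊆ basicOpen α b ↔ a ≤ b := by
  refine ⟨fun h => le_iff_forall_boundedLatticeHom_bool.2 fun f =>
    Bool.le_iff_imp.2 fun ha => @h ⟨f, f, rfl⟩ ha, ?_⟩
  rintro h ⟨_, f, rfl⟩ ha
  exact Bool.le_iff_imp.1 (le_iff_forall_boundedLatticeHom_bool.1 h f) ha

theorem basicOpen_injective : Function.Injective (basicOpen α) := fun _ _ h =>
  le_antisymm (basicOpen_subset_basicOpen_iff.1 h.le) (basicOpen_subset_basicOpen_iff.1 h.ge)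

end DistribLattice

section BooleanAlgebra

variable [BooleanAlgebra α]

theorem isTopologicalBasis_range_basicOpen : IsTopologicalBasis (Set.range (basicOpen α)) := by
  have fibers_eq :
      {s | ∃ a c, s = {f : boolSpectrum α | f.1 a = c}} = Set.range (basicOpen α) := by
    ext s
    constructor
    · rintro ⟨a, c | c, rfl⟩
      · refine ⟨aᶜ, ?_⟩
        ext f
        simp
      · exact ⟨a, rfl⟩
    · rintro ⟨a, rfl⟩
      exact ⟨a, true, rfl⟩
  refine isTopologicalBasis_of_subbasis_of_finiteInter ?_ ⟨⟨⊤, map_top _⟩, ?_⟩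
  · rw [← fibers_eq, ← induced_pi_eq_generateFrom_fibers]
    rfl
  · rintro _ ⟨a, rfl⟩ _ ⟨b, rfl⟩
    exact ⟨a ⊓ b, map_inf _ a b⟩

theorem exists_basicOpen_eq_of_isClopen {U : Set (boolSpectrum α)} (hU : IsClopen U) :
    ∃ a, U = basicOpen α a := by
  obtain ⟨s, hs, rfl⟩ := eq_finite_iUnion_of_isTopologicalBasis_of_isCompact_open _
    isTopologicalBasis_range_basicOpen U hU.isClosed.isCompact hU.isOpen
  refine ⟨hs.toFinset.sup id, ?_⟩
  rw [map_finset_sup, Finset.sup_set_eq_biUnion]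
  simp

end BooleanAlgebra

end boolSpectrum

open boolSpectrum in
/-- **Stone duality (algebra from space).** Let `B` be a Boolean algebra and let
`S = Spec B ⊆ Bool ^ B` be the set of (functions underlying) bounded lattice homomorphisms
`B → Bool`, topologized as a subspace of the product space `B → Bool` with `Bool` discrete.
Then `b ↦ V b = { f ∈ S | f b = ⊤ }` is an isomorphism of Boolean algebras from `B` onto
the clopen subsets of `S`: every `V b` is clopen, the map is injective, preserves `⊤`, `⊥`,
joins, meets, and complements, and every clopen subset of `S` is `V b` for some `b`. -/
theorem stone_duality_clopen_algebra
    (B : Type*) [BooleanAlgebra B]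
    (S : Set (B → Bool)) (hS : S = Set.range (fun h : BoundedLatticeHom B Bool => ⇑h))
    (V : B → Set S) (hV : ∀ (b : B) (f : S), f ∈ V b ↔ (f : B → Bool) b = ⊤) :
    (∀ b : B, IsClopen (V b)) ∧
      Function.Injective V ∧
      V ⊤ = Set.univ ∧
      V ⊥ = ∅ ∧
      (∀ a b : B, V (a ⊔ b) = V a ∪ V b) ∧
      (∀ a b : B, V (a ⊓ b) = V a ∩ V b) ∧
      (∀ a : B, V aᶜ = (V a)ᶜ) ∧
      (∀ U : Set S, IsClopen U → ∃ b : B, U = V b) := by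
  obtain rfl : S = boolSpectrum B := hS
  obtain rfl : V = basicOpen B := funext fun b => Set.ext (hV b)
  exact ⟨isClopen_basicOpen, basicOpen_injective, map_top _, map_bot _, map_sup _, map_inf _,
    map_compl' _, fun _ => exists_basicOpen_eq_of_isClopen⟩
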